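/- Let (C,χ) be a Hopf heap with Grunspan map ϑ. If ϑ exists, it is unique and given by ϑ(c) = Σ[c₁, [c₄,c₃,c₂], c₅]. -/

import Mathlib

open Coalgebra TensorProduct

universe u v w

/-- The December 2024 Mathlib `Coalgebra.Repr` (index type bundled as a field), which Mathlib has
since replaced by a structure taking the index type as a parameter. -/
structure CoalgebraRepr (R : Type u) {A : Type v}
    [CommSemiring R] [AddCommMonoid A] [Module R A] [CoalgebraStruct R A] (a : A) where
  {ι : Type w}
  (index : Finset ι)
  (left : ι → A)
  (right : ι → A)
  (eq : ∑ i ∈ index, left i ⊗ₜ[R] right i = CoalgebraStruct.comul a)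

/-- A Hopf heap: a coalgebra `C` together with a coalgebra map
`χ : C ⊗ C^co ⊗ C → C` (given here as a trilinear map) satisfying the heap axioms. -/
structure HopfHeap (F : Type u) (C : Type v) [Field F] [AddCommGroup C] [Module F C]
    [Coalgebra F C] where
  χ : C →ₗ[F] C →ₗ[F] C →ₗ[F] C
  counit_χ : ∀ a b c : C,
    counit (R := F) (χ a b c) = counit (R := F) a * counit (R := F) b * counit (R := F) c
  comul_χ : ∀ (a b c : C) (ra : CoalgebraRepr.{u, v, v} F a) (rb : CoalgebraRepr.{u, v, v} F b)
      (rc : CoalgebraRepr.{u, v, v} F c),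
    comul (R := F) (χ a b c) =
      ∑ i ∈ ra.index, ∑ j ∈ rb.index, ∑ k ∈ rc.index,
        χ (ra.left i) (rb.right j) (rc.left k) ⊗ₜ[F] χ (ra.right i) (rb.left j) (rc.right k)
  assoc : ∀ a b c d e : C, χ (χ a b c) d e = χ a b (χ c d e)
  heap_left : ∀ (c a : C) (rc : CoalgebraRepr.{u, v, v} F c),
    ∑ i ∈ rc.index, χ (rc.left i) (rc.right i) a = counit (R := F) c • a
  heap_right : ∀ (c a : C) (rc : CoalgebraRepr.{u, v, v} F c),
    ∑ i ∈ rc.index, χ a (rc.left i) (rc.right i) = counit (R := F) c • a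

variable {F : Type u} {C : Type v} [Field F] [AddCommGroup C] [Module F C] [Coalgebra F C]

/-- `θ` is a Grunspan map for the Hopf heap `hh`: a coalgebra endomorphism satisfying
`[[a,b,θ c],d,e] = [a,[d,c,b],e]`. -/
def HopfHeap.IsGrunspan (hh : HopfHeap F C) (θ : C →ₗ[F] C) : Prop :=
  (∀ c : C, counit (R := F) (θ c) = counit (R := F) c) ∧
  (∀ (c : C) (rc : CoalgebraRepr.{u, v, v} F c),
    comul (R := F) (θ c) = ∑ i ∈ rc.index, θ (rc.left i) ⊗ₜ[F] θ (rc.right i)) ∧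
  (∀ a b c d e : C, hh.χ (hh.χ a b (θ c)) d e = hh.χ a (hh.χ d c b) e)

/-- The right `(a,b)`-translation `τ_a^b : c ↦ [c,a,b]`. -/
def HopfHeap.tau (hh : HopfHeap F C) (a b : C) : C →ₗ[F] C where
  toFun c := hh.χ c a b
  map_add' x y := by simp
  map_smul' r x := by simp

/-!
Expanding `c = Σ ε(c₁) ε(c₃) c₂` and using the heap identities
`Σ [c₁, c₂, a] = ε(c) a = Σ [a, c₁, c₂]`, one gets
`θ c = Σ [c₁, c₂, [θ c₃, c₄, c₅]] = Σ [[c₁, c₂, θ c₃], c₄, c₅]`, and the Grunspan identity turns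
the last expression into `Σ [c₁, [c₄, c₃, c₂], c₅]`, which does not mention `θ`.
-/

namespace CoalgebraRepr

def toRepr {a : C} (r : CoalgebraRepr.{u, v, w} F a) : Coalgebra.Repr F a r.ι where
  index := r.index
  left := r.left
  right := r.right
  eq := r.eq

def ofRepr {ι : Type w} {a : C} (r : Coalgebra.Repr F a ι) : CoalgebraRepr.{u, v, w} F a where
  index := r.index
  left := r.left
  right := r.right
  eq := r.eq

variable {M : Type*} [AddCommGroup M] [Module F M]

theorem sum_counit_smul_map {a : C} (r : CoalgebraRepr.{u, v, w} F a) (f : C →ₗ[F] M) :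
    ∑ i ∈ r.index, counit (R := F) (r.left i) • f (r.right i) = f a := by
  simp only [← map_smul, ← map_sum]
  exact congrArg f (Coalgebra.sum_counit_smul r.toRepr)

theorem sum_map_smul_counit {a : C} (r : CoalgebraRepr.{u, v, w} F a) (f : C →ₗ[F] M) :
    ∑ i ∈ r.index, counit (R := F) (r.right i) • f (r.left i) = f a := by
  have h := congrArg (TensorProduct.rid F C) (Coalgebra.sum_tmul_counit_eq r.toRepr)
  simp only [map_sum, TensorProduct.rid_tmul, one_smul] at h
  simp only [← map_smul, ← map_sum]
  exact congrArg f h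

end CoalgebraRepr

namespace HopfHeap.IsGrunspan

variable {hh : HopfHeap F C} {θ : C →ₗ[F] C}

theorem sum_sum_χ_χ_eq_counit_smul (hθ : hh.IsGrunspan θ) (x : C) {a b : C}
    (ra : CoalgebraRepr.{u, v, v} F a) (rb : CoalgebraRepr.{u, v, v} F b) :
    ∑ j ∈ ra.index, ∑ l ∈ rb.index,
        hh.χ (ra.left j) (hh.χ (rb.left l) x (ra.right j)) (rb.right l) =
      counit (R := F) a • counit (R := F) b • θ x := calc
  _ = ∑ j ∈ ra.index, ∑ l ∈ rb.index,
        hh.χ (ra.left j) (ra.right j) (hh.χ (θ x) (rb.left l) (rb.right l)) := by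
    simp only [← hθ.2.2, hh.assoc]
  _ = ∑ j ∈ ra.index, hh.χ (ra.left j) (ra.right j) (counit (R := F) b • θ x) := by
    simp only [← map_sum, hh.heap_right]
  _ = counit (R := F) a • counit (R := F) b • θ x := hh.heap_left a _ ra

theorem eq_sum (hθ : hh.IsGrunspan θ)
    (c : C) (r : CoalgebraRepr.{u, v, v} F c)
    (ra : ∀ i, CoalgebraRepr.{u, v, v} F (r.left i))
    (rb : ∀ i, CoalgebraRepr.{u, v, v} F (r.right i))
    (rbr : ∀ i k, CoalgebraRepr.{u, v, v} F ((rb i).right k)) :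
    θ c = ∑ i ∈ r.index, ∑ j ∈ (ra i).index, ∑ k ∈ (rb i).index, ∑ l ∈ (rbr i k).index,
      hh.χ ((ra i).left j)
        (hh.χ ((rbr i k).left l) ((rb i).left k) ((ra i).right j))
        ((rbr i k).right l) := calc
  θ c = ∑ i ∈ r.index, counit (R := F) (r.left i) • θ (r.right i) :=
    (r.sum_counit_smul_map θ).symm
  _ = ∑ i ∈ r.index, ∑ k ∈ (rb i).index,
        counit (R := F) (r.left i) • counit (R := F) ((rb i).right k) • θ ((rb i).left k) := by
    simp only [← Finset.smul_sum, CoalgebraRepr.sum_map_smul_counit]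
  _ = _ := by
    refine Finset.sum_congr rfl fun i _ => ?_
    rw [Finset.sum_comm]
    simp only [hθ.sum_sum_χ_χ_eq_counit_smul]

end HopfHeap.IsGrunspan

/-- If a Grunspan map exists for a Hopf heap, it is unique and given by
`ϑ(c) = Σ [c₁, [c₄,c₃,c₂], c₅]`. -/
theorem grunspan_unique_formula (hh : HopfHeap F C) (θ : C →ₗ[F] C)
    (hθ : hh.IsGrunspan θ) :
    (∀ θ' : C →ₗ[F] C, hh.IsGrunspan θ' → θ' = θ) ∧
    (∀ (c : C) (r : CoalgebraRepr.{u, v, v} F c)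
      (ra : ∀ i, CoalgebraRepr.{u, v, v} F (r.left i))
      (rb : ∀ i, CoalgebraRepr.{u, v, v} F (r.right i))
      (rbr : ∀ i k, CoalgebraRepr.{u, v, v} F ((rb i).right k)),
      θ c = ∑ i ∈ r.index, ∑ j ∈ (ra i).index, ∑ k ∈ (rb i).index, ∑ l ∈ (rbr i k).index,
        hh.χ ((ra i).left j)
          (hh.χ ((rbr i k).left l) ((rb i).left k) ((ra i).right j))
          ((rbr i k).right l)) := by
  refine ⟨fun θ' hθ' => LinearMap.ext fun c => ?_, hθ.eq_sum⟩
  let rep (a : C) : CoalgebraRepr.{u, v, v} F a := .ofRepr (ℛ F a)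
  rw [hθ'.eq_sum c (rep c) (fun _ => rep _) (fun _ => rep _) (fun _ _ => rep _),
    hθ.eq_sum c (rep c) (fun _ => rep _) (fun _ => rep _) (fun _ _ => rep _)]
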